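/- arXiv:1601.00910 — 2 statements merged into one kernel-verified Lean document; each statement's English description precedes it below -/
import Mathlib

section
/- Let α, β, τ > 0 and ξ⁰ with 0 < (β/α)ξ⁰ < 1. Consider the integral equation (coming from setting θ = 0): 1 - 2S(t) = (β/α)ξ⁰e^{-t/τ} + (1/τ)∫₀ᵗ e^{(ς-t)/τ}(1 - S(ς))dς. Then S(t) = (e^{-t/(2τ)}/2)(1 - (β/α)ξ⁰) solves this equation for all t ≥ 0. -/
/-!
Against the kernel `e^{(ς-t)/τ}`, an exponential `e^{μς}` integrates to
`(e^{μt} - e^{-t/τ}) / (μ + 1/τ)`. Applying this with `μ = 0` and `μ = -1/(2τ)` evaluates the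
right-hand side in closed form; the rate `-1/(2τ)` is exactly the one for which the
`e^{-t/τ}` terms cancel against the initial datum and the `e^{-t/(2τ)}` terms reproduce `2S`.
-/

open Real intervalIntegral

theorem integral_exp_const_mul {c : ℝ} (hc : c ≠ 0) (a b : ℝ) :
    ∫ x in a..b, exp (c * x) = (exp (c * b) - exp (c * a)) / c := by
  rw [integral_comp_mul_left (fun x => exp x) hc, integral_exp, smul_eq_mul, inv_mul_eq_div]

theorem integral_exp_sub_div_mul_exp {τ μ : ℝ} (h : μ + τ⁻¹ ≠ 0) (t : ℝ) :
    ∫ s in (0:ℝ)..t, exp ((s - t) / τ) * exp (μ * s) =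
      (exp (μ * t) - exp (-t / τ)) / (μ + τ⁻¹) := by
  have hfactor : ∀ s, exp ((s - t) / τ) * exp (μ * s) = exp (-t / τ) * exp ((μ + τ⁻¹) * s) := by
    intro s
    rw [← exp_add, ← exp_add]
    ring_nf
  simp_rw [hfactor]
  rw [integral_const_mul, integral_exp_const_mul h, mul_div_assoc', mul_sub, ← exp_add,
    mul_zero, exp_zero, mul_one]
  ring_nf

theorem kondaurov_volterra_solution {τ : ℝ} (hτ : τ ≠ 0) (c t : ℝ) :
    1 - 2 * (exp (-t / (2 * τ)) / 2 * (1 - c)) = c * exp (-t / τ) +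
      (1 / τ) * ∫ s in (0:ℝ)..t, exp ((s - t) / τ) * (1 - exp (-s / (2 * τ)) / 2 * (1 - c)) := by
  have hhalf : ∀ s, exp (-s / (2 * τ)) = exp (-(2 * τ)⁻¹ * s) := fun s => by ring_nf
  have hsplit : ∀ s, exp ((s - t) / τ) * (1 - exp (-s / (2 * τ)) / 2 * (1 - c)) =
      exp ((s - t) / τ) * exp (0 * s) -
        (1 - c) / 2 * (exp ((s - t) / τ) * exp (-(2 * τ)⁻¹ * s)) := fun s => by
    rw [hhalf, zero_mul, exp_zero]; ring
  have hrate : -(2 * τ)⁻¹ + τ⁻¹ = (2 * τ)⁻¹ := by field_simp; ring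
  simp_rw [hsplit]
  rw [integral_sub (Continuous.intervalIntegrable (by fun_prop) _ _)
      ((Continuous.intervalIntegrable (by fun_prop) _ _).const_mul _),
    integral_const_mul, integral_exp_sub_div_mul_exp (by simpa using inv_ne_zero hτ),
    integral_exp_sub_div_mul_exp (by rw [hrate]; exact inv_ne_zero (mul_ne_zero two_ne_zero hτ)),
    hrate, ← hhalf, zero_mul, exp_zero]
  field_simp
  ring

theorem stmt_15_general (α β τ ξ0 : ℝ) (hτ : 0 < τ)
    (S : ℝ → ℝ)
    (hS : ∀ t, S t = (Real.exp (-t / (2 * τ)) / 2) * (1 - (β / α) * ξ0)) :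
    ∀ t, 0 ≤ t →
      1 - 2 * S t = (β / α) * ξ0 * Real.exp (-t / τ) +
        (1 / τ) * ∫ ς in (0:ℝ)..t, Real.exp ((ς - t) / τ) * (1 - S ς) := by
  intro t _
  simp only [hS]
  exact kondaurov_volterra_solution hτ.ne' _ t

theorem stmt_15 (α β τ ξ0 : ℝ) (hα : 0 < α) (hβ : 0 < β) (hτ : 0 < τ)
    (hr : 0 < (β / α) * ξ0 ∧ (β / α) * ξ0 < 1)
    (S : ℝ → ℝ)
    (hS : ∀ t, S t = (Real.exp (-t / (2 * τ)) / 2) * (1 - (β / α) * ξ0)) :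
    ∀ t, 0 ≤ t →
      1 - 2 * S t = (β / α) * ξ0 * Real.exp (-t / τ) +
        (1 / τ) * ∫ ς in (0:ℝ)..t, Real.exp ((ς - t) / τ) * (1 - S ς) :=
  stmt_15_general α β τ ξ0 hτ S hS
end

section
/- Let α, β, τ > 0 and ξ⁰ with 0 < (β/α)ξ⁰ < 1. Consider the integral equation (coming from setting θ = 1): 2(1 - S(t)) = (β/α)ξ⁰e^{-t/τ} + (1/τ)∫₀ᵗ e^{(ς-t)/τ}(1 - S(ς))dς. Then S(t) = 1 - (β/(2α))ξ⁰e^{-t/(2τ)} solves this equation for all t ≥ 0. -/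
/-! With `C = (β / (2α)) ξ⁰` the candidate gives `1 - S ς = C e^{-ς/(2τ)}`, and the kernel integral
of `e^{-ς/(2τ)}` is `2τ (e^{-t/(2τ)} - e^{-t/τ})`: after the factor `1/τ` its `e^{-t/τ}` part
cancels the forcing term `2C e^{-t/τ}`, leaving `2C e^{-t/(2τ)} = 2(1 - S t)`. -/

open Real

lemma integral_exp_div {c : ℝ} (hc : c ≠ 0) (a b : ℝ) :
    ∫ x in a..b, exp (x / c) = c * (exp (b / c) - exp (a / c)) := by
  rw [intervalIntegral.integral_comp_div exp hc, integral_exp, smul_eq_mul]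

lemma integral_exp_sub_div_mul_exp_neg_div {τ : ℝ} (hτ : τ ≠ 0) (t : ℝ) :
    ∫ ς in (0:ℝ)..t, exp ((ς - t) / τ) * exp (-ς / (2 * τ)) =
      2 * τ * (exp (-t / (2 * τ)) - exp (-t / τ)) := by
  have h_integrand : ∀ ς : ℝ, exp ((ς - t) / τ) * exp (-ς / (2 * τ)) =
      exp (-t / τ) * exp (ς / (2 * τ)) := fun ς => by
    rw [← exp_add, ← exp_add]; congr 1; field_simp; ring
  have h_exp : exp (-t / τ) * exp (t / (2 * τ)) = exp (-t / (2 * τ)) := by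
    rw [← exp_add]; congr 1; field_simp; ring
  simp only [h_integrand]
  rw [intervalIntegral.integral_const_mul, integral_exp_div (by positivity), zero_div, exp_zero,
    ← h_exp]
  ring

theorem stmt_16_general (α β τ ξ0 : ℝ) (hτ : 0 < τ)
    (S : ℝ → ℝ)
    (hS : ∀ t, S t = 1 - (β / (2 * α)) * ξ0 * Real.exp (-t / (2 * τ))) :
    ∀ t, 0 ≤ t →
      2 * (1 - S t) = (β / α) * ξ0 * Real.exp (-t / τ) +
        (1 / τ) * ∫ ς in (0:ℝ)..t, Real.exp ((ς - t) / τ) * (1 - S ς) := by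
  intro t _
  set C := β / (2 * α) * ξ0
  have h_gap : ∀ ς, 1 - S ς = C * exp (-ς / (2 * τ)) := fun ς => by rw [hS, sub_sub_cancel]
  have h_coeff : β / α * ξ0 = 2 * C := by simp only [C]; ring
  simp only [h_gap, mul_left_comm _ C, intervalIntegral.integral_const_mul]
  rw [integral_exp_sub_div_mul_exp_neg_div hτ.ne', h_coeff]
  field_simp
  ring

theorem stmt_16 (α β τ ξ0 : ℝ) (hα : 0 < α) (hβ : 0 < β) (hτ : 0 < τ)
    (hr : 0 < (β / α) * ξ0 ∧ (β / α) * ξ0 < 1)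
    (S : ℝ → ℝ)
    (hS : ∀ t, S t = 1 - (β / (2 * α)) * ξ0 * Real.exp (-t / (2 * τ))) :
    ∀ t, 0 ≤ t →
      2 * (1 - S t) = (β / α) * ξ0 * Real.exp (-t / τ) +
        (1 / τ) * ∫ ς in (0:ℝ)..t, Real.exp ((ς - t) / τ) * (1 - S ς) :=
  stmt_16_general α β τ ξ0 hτ S hS
end
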